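/- Let R be a commutative noetherian ring, S a flat R-algebra, and I a semi-injective R-complex. Then the S-complex Hom_R(S,I) is semi-injective over S. -/

import Mathlib

open CategoryTheory

universe u

instance {R S : Type u} [Ring R] [Ring S] (f : R →+* S) :
    (ModuleCat.restrictScalars f).Additive :=
  ⟨fun {_ _ _ _} => rfl⟩

instance {R S : Type u} [Ring R] [Ring S] (f : R →+* S) :
    (ModuleCat.coextendScalars f).Additive :=
  ⟨fun {_ _ _ _} => ModuleCat.hom_ext (LinearMap.ext fun _ => LinearMap.ext fun _ => rfl)⟩

/-- A homological complex is acyclic if it is exact in every degree, i.e. all its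
homology vanishes. -/
def isAcyclic {R : Type u} [CommRing R] {ι : Type*} {c : ComplexShape ι}
    (K : HomologicalComplex (ModuleCat.{u} R) c) : Prop :=
  ∀ i, K.ExactAt i

/-- A `ℤ`-indexed chain complex `I` of `R`-modules is *semi-injective* if every component
`I_n` is an injective `R`-module and the functor `Hom_R(-, I)` preserves acyclicity;
equivalently (as formalized here), every chain map from an acyclic complex to `I` is
null-homotopic. -/
def SemiInjective (R : Type u) [CommRing R] (I : ChainComplex (ModuleCat.{u} R) ℤ) : Prop :=
  (∀ n : ℤ, Injective (I.X n)) ∧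
    ∀ M : ChainComplex (ModuleCat.{u} R) ℤ, isAcyclic M → ∀ f : M ⟶ I, Nonempty (Homotopy f 0)

/-- The injective dimension of a `ℤ`-indexed chain complex `N` of `R`-modules: the
infimum, in `ℤ ∪ {±∞}`, of the integers `j` such that there is a semi-injective
resolution `I` of `N` (a quasi-isomorphism `N ⟶ I` with `I` semi-injective) with
`I_n = 0` for all `n < -j`. -/
noncomputable def injDim (R : Type u) [CommRing R] (N : ChainComplex (ModuleCat.{u} R) ℤ) :
    WithBot (WithTop ℤ) :=
  sInf {i : WithBot (WithTop ℤ) | ∃ j : ℤ, i = (j : ℤ) ∧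
    ∃ (I : ChainComplex (ModuleCat.{u} R) ℤ) (f : N ⟶ I), SemiInjective R I ∧ QuasiIso f ∧
      ∀ n : ℤ, n < -j → Limits.IsZero (I.X n)}

/-- The complex `Hom_R(S, I)` of `S`-modules (with the `S`-module structure through the
first variable) obtained by applying coextension of scalars degreewise to a complex `I` of
`R`-modules. -/
noncomputable def coextComplex (R : Type u) [CommRing R] (S : Type u) [CommRing S]
    [Algebra R S] (I : ChainComplex (ModuleCat.{u} R) ℤ) : ChainComplex (ModuleCat.{u} S) ℤ :=
  ((ModuleCat.coextendScalars (algebraMap R S)).mapHomologicalComplex _).obj I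

/-- Restriction of scalars along `R → S`, applied degreewise to a complex of `S`-modules. -/
noncomputable def restrComplex (R : Type u) [CommRing R] (S : Type u) [CommRing S]
    [Algebra R S] (J : ChainComplex (ModuleCat.{u} S) ℤ) : ChainComplex (ModuleCat.{u} R) ℤ :=
  ((ModuleCat.restrictScalars (algebraMap R S)).mapHomologicalComplex _).obj J

section Aux

variable {R S : Type u} [CommRing R] [CommRing S] [Algebra R S]

/-- The restriction ⊣ coextension adjunction along `algebraMap R S`. -/
noncomputable abbrev coextAdj (R S : Type u) [CommRing R] [CommRing S] [Algebra R S] :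
    ModuleCat.restrictScalars (algebraMap R S) ⊣ ModuleCat.coextendScalars (algebraMap R S) :=
  ModuleCat.restrictCoextendScalarsAdj (algebraMap R S)

lemma coextAdj_homEquiv_add {X : ModuleCat.{u} S} {Y : ModuleCat.{u} R}
    (a b : (ModuleCat.restrictScalars (algebraMap R S)).obj X ⟶ Y) :
    (coextAdj R S).homEquiv X Y (a + b) =
      (coextAdj R S).homEquiv X Y a + (coextAdj R S).homEquiv X Y b := by
  simp only [Adjunction.homEquiv_apply, Functor.map_add, Preadditive.comp_add]

lemma coextAdj_homEquiv_zero {X : ModuleCat.{u} S} {Y : ModuleCat.{u} R} :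
    (coextAdj R S).homEquiv X Y 0 = 0 := by
  simp only [Adjunction.homEquiv_apply, Functor.map_zero, Limits.comp_zero]

/-- Restriction of scalars preserves acyclicity (indeed, it reflects it too). -/
lemma isAcyclic_restrComplex {M : ChainComplex (ModuleCat.{u} S) ℤ}
    (hM : isAcyclic M) : isAcyclic (restrComplex R S M) := by
  intro i
  rw [HomologicalComplex.exactAt_iff, ShortComplex.moduleCat_exact_iff]
  have := hM i
  rw [HomologicalComplex.exactAt_iff, ShortComplex.moduleCat_exact_iff] at this
  intro x hx
  exact this x hx

end Aux

/-- Let `R` be a commutative noetherian ring, `S` a flat (commutative) `R`-algebra, and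
`I` a semi-injective `R`-complex.  Then the `S`-complex `Hom_R(S,I)` (with `S`-module
structure through the first variable, i.e. the degreewise coextension of scalars of `I`)
is semi-injective over `S`. -/
theorem semiInjective_coextComplex
    (R : Type u) [CommRing R] [IsNoetherianRing R]
    (S : Type u) [CommRing S] [Algebra R S] [Module.Flat R S]
    (I : ChainComplex (ModuleCat.{u} R) ℤ) (hI : SemiInjective R I) :
    SemiInjective S (coextComplex R S I) := by
  obtain ⟨hinj, hnull⟩ := hI
  constructor
  · intro n
    have := hinj n
    exact (coextAdj R S).map_injective (I.X n) (hinj n)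
  · intro M hM φ
    -- transpose φ across the adjunction
    let ψ : restrComplex R S M ⟶ I :=
      { f := fun n => ((coextAdj R S).homEquiv (M.X n) (I.X n)).symm (φ.f n)
        comm' := by
          intro n m hnm
          have hφ := φ.comm' n m hnm
          dsimp [coextComplex] at hφ
          dsimp [restrComplex]
          exact ((coextAdj R S).homEquiv_naturality_right_symm (φ.f n) (I.d n m)).symm.trans
            ((congrArg _ hφ).trans ((coextAdj R S).homEquiv_naturality_left_symm (M.d n m) (φ.f m))) }
    obtain ⟨H⟩ := hnull (restrComplex R S M) (isAcyclic_restrComplex hM) ψ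
    refine ⟨{ hom := fun i j => (coextAdj R S).homEquiv (M.X i) (I.X j) (H.hom i j),
              zero := ?_, comm := ?_ }⟩
    · intro i j hij
      erw [H.zero i j hij, coextAdj_homEquiv_zero]
      rfl
    · intro i
      have hri : (ComplexShape.down ℤ).Rel i (i - 1) := by simp
      have hri' : (ComplexShape.down ℤ).Rel (i + 1) i := by simp
      have hc := H.comm i
      rw [dNext_eq _ hri, prevD_eq _ hri'] at hc
      simp only [HomologicalComplex.zero_f, add_zero] at hc
      have hψ : φ.f i = (coextAdj R S).homEquiv (M.X i) (I.X i) (ψ.f i) := by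
        exact (Equiv.apply_symm_apply _ _).symm
      erw [dNext_eq _ hri, prevD_eq _ hri']
      simp only [HomologicalComplex.zero_f, add_zero]
      rw [hψ, (hc : ((coextAdj R S).homEquiv (M.X i) (I.X i)).symm (φ.f i) = _)]
      erw [coextAdj_homEquiv_add]
      have e1 : (coextAdj R S).homEquiv (M.X i) (I.X i)
            ((restrComplex R S M).d i (i - 1) ≫ H.hom (i - 1) i) =
          M.d i (i - 1) ≫ (coextAdj R S).homEquiv (M.X (i - 1)) (I.X i) (H.hom (i - 1) i) := by
        dsimp only [restrComplex, Functor.mapHomologicalComplex_obj_d]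
        exact (coextAdj R S).homEquiv_naturality_left (M.d i (i - 1)) (H.hom (i - 1) i)
      have e2 : (coextAdj R S).homEquiv (M.X i) (I.X i)
            (H.hom i (i + 1) ≫ I.d (i + 1) i) =
          (coextAdj R S).homEquiv (M.X i) (I.X (i + 1)) (H.hom i (i + 1)) ≫
            (coextComplex R S I).d (i + 1) i := by
        dsimp only [coextComplex, Functor.mapHomologicalComplex_obj_d]
        exact (coextAdj R S).homEquiv_naturality_right (H.hom i (i + 1)) (I.d (i + 1) i)
      exact congrArg₂ (· + ·) e1 e2
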